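/- arXiv:1407.6843 — 4 statements merged into one kernel-verified Lean document; each statement's English description precedes it below -/
import Mathlib

section
/- Let F be a trilinear form on (V,J) with F(x,y,z) = F(x,z,y) = F(x,Jy,Jz), and define N(x,y,z) = F(x,Jy,z) - F(y,Jx,z) + F(Jx,y,z) - F(Jy,x,z) and N̂(x,y,z) = F(x,Jy,z) + F(y,Jx,z) + F(Jx,y,z) + F(Jy,x,z). Then F is recovered from N and N̂ by the formula F(x,y,z) = -(1/4){N(Jx,y,z) + N(Jx,z,y) + N̂(Jx,y,z) + N̂(Jx,z,y)}. -/
/-- Recovery of F from the pair of Nijenhuis tensors: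
F(x,y,z) = -(1/4){N(Jx,y,z) + N(Jx,z,y) + N̂(Jx,y,z) + N̂(Jx,z,y)}. -/
theorem F_from_Nijenhuis_pair
    {V : Type*} [AddCommGroup V] [Module ℝ V]
    (J : V →ₗ[ℝ] V) (hJ : ∀ x, J (J x) = -x)
    (F : V →ₗ[ℝ] V →ₗ[ℝ] V →ₗ[ℝ] ℝ)
    (hF₁ : ∀ x y z, F x y z = F x z y)
    (hF₂ : ∀ x y z, F x y z = F x (J y) (J z))
    (N Nhat : V → V → V → ℝ)
    (hN : ∀ x y z, N x y z = F x (J y) z - F y (J x) z + F (J x) y z - F (J y) x z)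
    (hNhat : ∀ x y z, Nhat x y z = F x (J y) z + F y (J x) z + F (J x) y z + F (J y) x z) :
    ∀ x y z, F x y z =
      -(1/4) * (N (J x) y z + N (J x) z y + Nhat (J x) y z + Nhat (J x) z y) := by
  intro x y z
  simp only [hN, hNhat, hJ, map_neg, LinearMap.neg_apply, neg_neg]
  -- key cancellation: F(Jx,Jy,z) + F(Jx,Jz,y) = 0
  have key : F (J x) (J y) z + F (J x) (J z) y = 0 := by
    have h1 : F (J x) (J y) z = F (J x) (J (J y)) (J z) := hF₂ (J x) (J y) z
    rw [hJ, map_neg, LinearMap.neg_apply] at h1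
    have h2 : F (J x) (J z) y = F (J x) y (J z) := hF₁ (J x) (J z) y
    linarith
  have hs : F x y z = F x z y := hF₁ x y z
  linarith
end

section
/- With F, J, N̂ defined as in the almost complex Norden setting, the associated Nijenhuis tensor N̂ satisfies N̂(x,y,z) = N̂(x,Jy,Jz) = N̂(Jx,y,Jz) = -N̂(Jx,Jy,z) and N̂(Jx,y,z) = N̂(x,Jy,z) = -N̂(x,y,Jz) for all x,y,z. -/
/-- Properties of the Nijenhuis tensor N̂ on an almost complex Norden vector space:
N̂(x,y,z) = N̂(x,Jy,Jz) = N̂(Jx,y,Jz) = -N̂(Jx,Jy,z) and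
N̂(Jx,y,z) = N̂(x,Jy,z) = -N̂(x,y,Jz). -/
theorem associated_Nijenhuis_properties
    {V : Type*} [AddCommGroup V] [Module ℝ V]
    (J : V →ₗ[ℝ] V) (hJ : ∀ x, J (J x) = -x)
    (F : V →ₗ[ℝ] V →ₗ[ℝ] V →ₗ[ℝ] ℝ)
    (hF₁ : ∀ x y z, F x y z = F x z y)
    (hF₂ : ∀ x y z, F x y z = F x (J y) (J z))
    (Nhat : V → V → V → ℝ)
    (hNhat : ∀ x y z, Nhat x y z = F x (J y) z + F y (J x) z + F (J x) y z + F (J y) x z) :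
    ∀ x y z,
      Nhat x y z = Nhat x (J y) (J z) ∧
      Nhat x y z = Nhat (J x) y (J z) ∧
      Nhat x y z = - Nhat (J x) (J y) z ∧
      Nhat (J x) y z = Nhat x (J y) z ∧
      Nhat (J x) y z = - Nhat x y (J z) := by
  have hkey : ∀ a b c, F a b (J c) = - F a (J b) c := by
    intro a b c
    have h1 : F a b (J c) = F a (J (J c)) (J b) := by rw [hF₁]; exact hF₂ a (J c) b
    rw [h1, hJ]
    simp only [map_neg, LinearMap.neg_apply]
    rw [hF₁]
  intro x y z
  simp only [hNhat, hJ, hkey, map_neg, LinearMap.neg_apply, LinearMap.map_neg]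
  refine ⟨by ring, by ring, by ring, by ring, by ring⟩
end

section
/- On an almost contact B-metric vector space with N, N̂ defined from F as above, the identity N(ξ,φy,φz) + N(ξ,φz,φy) + N̂(ξ,φy,φz) + N̂(ξ,φz,φy) = 0 holds for all y,z. -/
/-- On an almost contact B-metric vector space,
N(ξ,φy,φz) + N(ξ,φz,φy) + N̂(ξ,φy,φz) + N̂(ξ,φz,φy) = 0. -/
theorem contact_Nijenhuis_xi_identity
    {V : Type*} [AddCommGroup V] [Module ℝ V]
    (φ : V →ₗ[ℝ] V) (ξ : V) (η : V →ₗ[ℝ] ℝ)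
    (hφξ : φ ξ = 0)
    (hφφ : ∀ x, φ (φ x) = -x + η x • ξ)
    (hηφ : ∀ x, η (φ x) = 0)
    (hηξ : η ξ = 1)
    (F : V →ₗ[ℝ] V →ₗ[ℝ] V →ₗ[ℝ] ℝ)
    (hF₁ : ∀ x y z, F x y z = F x z y)
    (hF₂ : ∀ x y z, F x y z = F x (φ y) (φ z) + η y * F x ξ z + η z * F x y ξ)
    (N Nhat : V → V → V → ℝ)
    (hN : ∀ x y z, N x y z =
      (F (φ x) y z - F x y (φ z) + η z * F x (φ y) ξ)
      - (F (φ y) x z - F y x (φ z) + η z * F y (φ x) ξ))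
    (hNhat : ∀ x y z, Nhat x y z =
      (F (φ x) y z - F x y (φ z) + η z * F x (φ y) ξ)
      + (F (φ y) x z - F y x (φ z) + η z * F y (φ x) ξ)) :
    ∀ y z, N ξ (φ y) (φ z) + N ξ (φ z) (φ y)
      + Nhat ξ (φ y) (φ z) + Nhat ξ (φ z) (φ y) = 0 := by
  intro y z
  have h1 := hF₂ ξ (φ y) z
  have h2 := hF₂ ξ (φ z) y
  rw [hφφ y] at h1
  rw [hφφ z] at h2
  simp only [map_add, map_neg, map_smul, LinearMap.add_apply, LinearMap.neg_apply,
    LinearMap.smul_apply, smul_eq_mul, hηφ] at h1 h2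
  have e1 := hF₁ ξ (φ y) z
  have e2 := hF₁ ξ (φ z) y
  have e3 := hF₁ ξ ξ (φ y)
  have e4 := hF₁ ξ ξ (φ z)
  simp only [hN, hNhat, hφξ, map_zero, LinearMap.zero_apply, hηφ, zero_mul, mul_zero,
    hηξ, one_mul]
  simp only [hφφ, map_add, map_neg, map_smul, LinearMap.add_apply, LinearMap.neg_apply,
    LinearMap.smul_apply, smul_eq_mul]
  linear_combination h1 + h2 + e1 + e2 + (η y) * e4 + (η z) * e3
end

section
/- On an almost contact B-metric vector space with F, N, N̂ as above, the fundamental tensor is recovered by F(x,y,z) = -(1/4){N(φx,y,z) + N(φx,z,y) + N̂(φx,y,z) + N̂(φx,z,y)} + (1/2)η(x){N(ξ,y,φz) + N̂(ξ,y,φz) + η(z)N̂(ξ,ξ,φy)}. -/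
/-- Recovery of the fundamental tensor F from the pair of Nijenhuis tensors on an almost
contact B-metric vector space:
F(x,y,z) = -(1/4){N(φx,y,z) + N(φx,z,y) + N̂(φx,y,z) + N̂(φx,z,y)}
  + (1/2)η(x){N(ξ,y,φz) + N̂(ξ,y,φz) + η(z)N̂(ξ,ξ,φy)}. -/
theorem contact_F_from_Nijenhuis_pair
    {V : Type*} [AddCommGroup V] [Module ℝ V]
    (φ : V →ₗ[ℝ] V) (ξ : V) (η : V →ₗ[ℝ] ℝ)
    (hφξ : φ ξ = 0)
    (hφφ : ∀ x, φ (φ x) = -x + η x • ξ)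
    (hηφ : ∀ x, η (φ x) = 0)
    (hηξ : η ξ = 1)
    (F : V →ₗ[ℝ] V →ₗ[ℝ] V →ₗ[ℝ] ℝ)
    (hF₁ : ∀ x y z, F x y z = F x z y)
    (hF₂ : ∀ x y z, F x y z = F x (φ y) (φ z) + η y * F x ξ z + η z * F x y ξ)
    (N Nhat : V → V → V → ℝ)
    (hN : ∀ x y z, N x y z =
      (F (φ x) y z - F x y (φ z) + η z * F x (φ y) ξ)
      - (F (φ y) x z - F y x (φ z) + η z * F y (φ x) ξ))
    (hNhat : ∀ x y z, Nhat x y z =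
      (F (φ x) y z - F x y (φ z) + η z * F x (φ y) ξ)
      + (F (φ y) x z - F y x (φ z) + η z * F y (φ x) ξ)) :
    ∀ x y z, F x y z =
      -(1/4) * (N (φ x) y z + N (φ x) z y + Nhat (φ x) y z + Nhat (φ x) z y)
      + (1/2) * η x * (N ξ y (φ z) + Nhat ξ y (φ z) + η z * Nhat ξ ξ (φ y)) := by
  intro x y z
  have h0 : F ξ ξ ξ = 0 := by
    have := hF₂ ξ ξ ξ
    simp [hφξ, hηξ] at this
    linarith
  have e1 : F (φ x) y (φ z) =
      -F (φ x) (φ y) z + η z * F (φ x) (φ y) ξ + η y * F (φ x) ξ (φ z) := by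
    have h := hF₂ (φ x) y (φ z)
    simp only [hφφ, hηφ, map_add, map_neg, map_smul, LinearMap.add_apply,
      LinearMap.neg_apply, LinearMap.smul_apply, smul_eq_mul, hηξ] at h ⊢
    linear_combination h
  rw [hN (φ x) y z, hN (φ x) z y, hN ξ y (φ z), hNhat (φ x) y z, hNhat (φ x) z y,
    hNhat ξ y (φ z), hNhat ξ ξ (φ y)]
  simp only [hφφ, hφξ, hηφ, hηξ, map_add, map_neg, map_smul, LinearMap.add_apply,
    LinearMap.neg_apply, LinearMap.smul_apply, LinearMap.map_zero, LinearMap.zero_apply,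
    map_zero, smul_eq_mul]
  linear_combination (1/2) * hF₁ x y z - (η x / 2) * hF₁ ξ y z
    + (η x * η z * η y) * h0 + (η x * η z) * hF₁ ξ y ξ
    - (1/2) * e1 - (1/2) * hF₁ (φ x) z (φ y) - (η y / 2) * hF₁ (φ x) ξ (φ z)
end
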